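/- Let M ≥ 1 be an integer, α a real with 0 < α < 1, t ≥ 0 a real, and let n, j, k be integers with 1 ≤ j, k ≤ n ≤ M. Then the sum ∑_{x∈ℤ} Φ^{n,t}_{n-j}(x)·Ψ^{n,t}_{n-k}(x) converges absolutely and equals δ_{j,k} (i.e. 1 if j = k and 0 otherwise). -/

import Mathlib

open Complex Real MeasureTheory

noncomputable section

/-- `Ψ^{n,t}_{n-j}(x)` for the case `n ≤ M` (block of slow particles of rate `α`):
`(1/(2πi)) ∮_{|w|=2} (dw/w) (w(w-α))^{n-j} e^{tw} w^{-(x+2n-2M)}`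
(the value is independent of the radius `R > 1`; we take `R = 2`). -/
def Psi (M : ℕ) (α : ℝ) (n j : ℕ) (t : ℝ) (x : ℤ) : ℂ :=
  (2 * (π : ℂ) * I)⁻¹ * ∮ w in C((0 : ℂ), 2),
    w⁻¹ * (w * (w - (α : ℂ))) ^ ((n : ℤ) - (j : ℤ)) * Complex.exp ((t : ℂ) * w) *
      w ^ (-(x + 2 * (n : ℤ) - 2 * (M : ℤ)))

/-- `Φ^{n,t}_{n-j}(x)` for the case `n ≤ M`:
`(1/(2πi)) ∮ dv (2v+2-α)(1+v)^{x+2n-2M} e^{-t(v+1)} ((v+1)(v+1-α))^{-(n-j+1)}`,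
over a (small) circle of radius `r` around `α - 1`, which encloses exactly that point. -/
def Phi (M : ℕ) (α : ℝ) (n j : ℕ) (t : ℝ) (r : ℝ) (x : ℤ) : ℂ :=
  (2 * (π : ℂ) * I)⁻¹ * ∮ v in C((α : ℂ) - 1, r),
    (2 * v + 2 - (α : ℂ)) * (1 + v) ^ (x + 2 * (n : ℤ) - 2 * (M : ℤ)) *
      Complex.exp (-((t : ℂ) * (v + 1))) *
      ((v + 1) * (v + 1 - (α : ℂ))) ^ (-((n : ℤ) - (j : ℤ) + 1))

/-!
With `q = n - k`, `Ψ(x)` is the Taylor coefficient of `w ^ (x + 2n - 2M - q)` of the entire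
function `h(w) = (w - α) ^ q e^{tw}` (and vanishes when that exponent is negative). Summing
`Φ(x) Ψ(x)` over `x` therefore substitutes `1 + v` into the Taylor series of `h` inside the
`Φ`-integral; the interchange of sum and integral is dominated convergence, since the Taylor
series of an entire function converges absolutely everywhere. The exponentials then cancel and
the integrand becomes `u' u ^ (j - k - 1)` with `u(v) = (v + 1) (v + 1 - α)`. Around `α - 1`
(the other zero `-1` of `u` lying outside the circle) this integrates to `2πi` if `j = k`, the
residue of `u' / u`, and to `0` otherwise, `u ^ (j - k) / (j - k)` being a primitive.
-/

open Metric Set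
open scoped NNReal

theorem summable_norm_circleIntegral_and_hasSum {E ι : Type*} [NormedAddCommGroup E]
    [NormedSpace ℂ E] [Countable ι] {f : ι → ℂ → E} {g : ℂ → E} {c : ℂ} {R : ℝ} {bound : ι → ℝ}
    (hR : 0 ≤ R) (hf : ∀ i, ContinuousOn (f i) (sphere c R))
    (hle : ∀ i, ∀ z ∈ sphere c R, ‖f i z‖ ≤ bound i) (hbound : Summable bound)
    (hg : ∀ z ∈ sphere c R, HasSum (fun i ↦ f i z) (g z)) :
    Summable (fun i ↦ ‖∮ z in C(c, R), f i z‖) ∧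
      HasSum (fun i ↦ ∮ z in C(c, R), f i z) (∮ z in C(c, R), g z) := by
  have hmem : ∀ θ, circleMap c R θ ∈ sphere c R := circleMap_mem_sphere c hR
  refine ⟨.of_nonneg_of_le (fun _ ↦ norm_nonneg _)
    (fun i ↦ circleIntegral.norm_integral_le_of_norm_le_const hR (hle i))
    (hbound.mul_left (2 * π * R)), ?_⟩
  refine intervalIntegral.hasSum_integral_of_dominated_convergence (fun i _ ↦ R * bound i)
    (fun i ↦ ?_) (fun i ↦ .of_forall fun θ _ ↦ ?_) (.of_forall fun _ _ ↦ hbound.mul_left R)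
    intervalIntegrable_const (.of_forall fun θ _ ↦ (hg _ (hmem θ)).const_smul _)
  · exact ((hf i).circleIntegrable hR).out.def'.aestronglyMeasurable
  · rw [norm_smul, deriv_circleMap, norm_mul, norm_circleMap_zero, Complex.norm_I, mul_one,
      abs_of_nonneg hR]
    exact mul_le_mul_of_nonneg_left (hle i _ (hmem θ)) hR

theorem two_pi_I_inv_mul_circleIntegral_zpow_mul_eq_coeff (f : ℂ → ℂ) (R : ℝ) (m : ℕ) :
    (2 * π * I)⁻¹ * ∮ z in C(0, R), z ^ (-(m : ℤ) - 1) * f z =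
      (cauchyPowerSeries f 0 R).coeff m := by
  have h : ∀ z : ℂ, z ^ (-(m : ℤ) - 1) * f z = (1 / (z - 0)) ^ m • (z - 0)⁻¹ • f z := by
    intro z
    rw [show -(m : ℤ) - 1 = -((m + 1 : ℕ) : ℤ) by push_cast; ring, zpow_neg, zpow_natCast]
    simp only [pow_succ, mul_inv_rev, sub_zero, one_div, inv_pow, smul_eq_mul]
    ring
  simp_rw [h]
  rw [FormalMultilinearSeries.coeff, show (1 : Fin m → ℂ) = fun _ ↦ 1 from rfl,
    cauchyPowerSeries_apply, smul_eq_mul]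

namespace Differentiable

variable {f : ℂ → ℂ} {R : ℝ≥0}

theorem hasSum_pow_mul_cauchyPowerSeries_coeff (hf : Differentiable ℂ f) (hR : 0 < R) (w : ℂ) :
    HasSum (fun m ↦ w ^ m * (cauchyPowerSeries f 0 R).coeff m) (f w) := by
  simpa [FormalMultilinearSeries.apply_eq_pow_smul_coeff] using
    (hf.hasFPowerSeriesOnBall 0 hR).hasSum (y := w) (by simp)

theorem summable_norm_cauchyPowerSeries_coeff_mul_pow (hf : Differentiable ℂ f) (hR : 0 < R)
    (ρ : ℝ≥0) : Summable (fun m ↦ ‖(cauchyPowerSeries f 0 R).coeff m‖ * ρ ^ m) := by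
  simpa [FormalMultilinearSeries.norm_apply_eq_norm_coef] using
    (cauchyPowerSeries f 0 R).summable_norm_mul_pow
      ((hf.hasFPowerSeriesOnBall 0 hR).r_le.trans_lt' ENNReal.coe_lt_top)

end Differentiable

theorem summable_norm_and_hasSum_circleIntegral_pow_mul {f φ K : ℂ → ℂ}
    (hf : Differentiable ℂ f) {R₀ : ℝ≥0} (hR₀ : 0 < R₀) {c : ℂ} {R : ℝ} (hR : 0 ≤ R)
    (hφ : ContinuousOn φ (sphere c R)) (hK : ContinuousOn K (sphere c R)) :
    Summable (fun m ↦ ‖(∮ z in C(c, R), φ z ^ m * K z) * (cauchyPowerSeries f 0 R₀).coeff m‖) ∧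
      HasSum (fun m ↦ (∮ z in C(c, R), φ z ^ m * K z) * (cauchyPowerSeries f 0 R₀).coeff m)
        (∮ z in C(c, R), f (φ z) * K z) := by
  set a := (cauchyPowerSeries f 0 R₀).coeff
  obtain ⟨Cφ, hCφ⟩ := (isCompact_sphere c R).exists_bound_of_continuousOn hφ
  obtain ⟨CK, hCK⟩ := (isCompact_sphere c R).exists_bound_of_continuousOn hK
  have hint : ∀ m, (∮ z in C(c, R), φ z ^ m * K z) * a m = ∮ z in C(c, R), φ z ^ m * K z * a m :=
    fun m ↦ (circleIntegral.integral_smul_const _ _ _ _).symm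
  simp_rw [hint]
  refine summable_norm_circleIntegral_and_hasSum (bound := fun m ↦ CK * (‖a m‖ * Cφ.toNNReal ^ m))
    hR (fun m ↦ ((hφ.pow m).mul hK).mul continuousOn_const) (fun m z hz ↦ ?_)
    ((hf.summable_norm_cauchyPowerSeries_coeff_mul_pow hR₀ _).mul_left CK) fun z _ ↦ ?_
  · rw [norm_mul, norm_mul, norm_pow]
    have := pow_le_pow_left₀ (norm_nonneg _) ((hCφ z hz).trans (Real.le_coe_toNNReal Cφ)) m
    calc ‖φ z‖ ^ m * ‖K z‖ * ‖a m‖ ≤ Cφ.toNNReal ^ m * CK * ‖a m‖ := by gcongr; exact hCK z hz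
      _ = _ := by ring
  · have := (hf.hasSum_pow_mul_cauchyPowerSeries_coeff hR₀ (φ z)).mul_right (K z)
    simp_rw [mul_right_comm _ (FormalMultilinearSeries.coeff _ _)] at this
    exact this

theorem circleIntegral_sub_inv_of_notMem_closedBall {c w : ℂ} {R : ℝ} (hR : 0 ≤ R)
    (hw : w ∉ closedBall c R) : ∮ z in C(c, R), (z - w)⁻¹ = 0 := by
  have hne : ∀ z ∈ closedBall c R, z - w ≠ 0 := fun z hz h ↦ hw (sub_eq_zero.1 h ▸ hz)
  exact circleIntegral_eq_zero_of_differentiable_on_off_countable hR countable_empty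
    (ContinuousOn.inv₀ (by fun_prop) hne)
    fun z hz ↦ (differentiableAt_id.sub_const w).inv (hne z (ball_subset_closedBall hz.1))

theorem circleIntegral_deriv_mul_zpow_eq_zero {u u' : ℂ → ℂ} {c : ℂ} {R : ℝ} {e : ℤ}
    (hR : 0 ≤ R) (he : e ≠ -1) (hu : ∀ z ∈ sphere c R, HasDerivAt u (u' z) z)
    (hu0 : ∀ z ∈ sphere c R, u z ≠ 0) : ∮ z in C(c, R), u' z * u z ^ e = 0 := by
  have he' : (e + 1 : ℂ) ≠ 0 := by exact_mod_cast (show e + 1 ≠ 0 by omega)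
  refine circleIntegral.integral_eq_zero_of_hasDerivWithinAt
    (f := fun z ↦ u z ^ (e + 1) / (e + 1)) hR fun z hz ↦ ?_
  have := ((hasDerivAt_zpow (e + 1) (u z) (.inl (hu0 z hz))).comp z (hu z hz)).div_const (e + 1)
  refine (this.congr_deriv ?_).hasDerivWithinAt
  rw [add_sub_cancel_right]
  push_cast
  field_simp

theorem circleIntegral_two_mul_sub_mul_zpow {a b c : ℂ} {R : ℝ} (ha : a ∈ ball c R)
    (hb : b ∉ closedBall c R) (e : ℤ) :
    ∮ z in C(c, R), (2 * z - a - b) * ((z - a) * (z - b)) ^ e =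
      if e = -1 then 2 * π * I else 0 := by
  have hR : 0 ≤ R := (nonempty_ball.1 ⟨a, ha⟩).le
  have hza : ∀ z ∈ sphere c R, z - a ≠ 0 := fun z hz h ↦
    (sphere_disjoint_ball (x := c) (ε := R)).ne_of_mem hz ha (sub_eq_zero.1 h)
  have hzb : ∀ z ∈ sphere c R, z - b ≠ 0 := fun z hz h ↦
    hb (sub_eq_zero.1 h ▸ sphere_subset_closedBall hz)
  split_ifs with he
  · subst he
    have hsplit : EqOn (fun z ↦ (2 * z - a - b) * ((z - a) * (z - b)) ^ (-1 : ℤ))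
        (fun z ↦ (z - a)⁻¹ + (z - b)⁻¹) (sphere c R) := fun z hz ↦ by
      simp only [zpow_neg_one]
      field_simp [hza z hz, hzb z hz]
      ring
    rw [circleIntegral.integral_congr hR hsplit, circleIntegral.integral_add,
      circleIntegral.integral_sub_inv_of_mem_ball ha,
      circleIntegral_sub_inv_of_notMem_closedBall hR hb, add_zero]
    · exact ((continuousOn_id.sub continuousOn_const).inv₀ hza).circleIntegrable hR
    · exact ((continuousOn_id.sub continuousOn_const).inv₀ hzb).circleIntegrable hR
  · refine circleIntegral_deriv_mul_zpow_eq_zero hR he (fun z _ ↦ ?_)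
      fun z hz ↦ mul_ne_zero (hza z hz) (hzb z hz)
    exact (((hasDerivAt_id' z).sub_const a).fun_mul ((hasDerivAt_id' z).sub_const b)).congr_deriv
      (by ring)

section Orthogonality

variable {M n j k q : ℕ} {α t r : ℝ}

def psiGenFun (α t : ℝ) (q : ℕ) (w : ℂ) : ℂ := (w - α) ^ q * Complex.exp (t * w)

def phiKernel (α t : ℝ) (e : ℤ) (v : ℂ) : ℂ :=
  (2 * v + 2 - α) * Complex.exp (-(t * (v + 1))) * ((v + 1) * (v + 1 - α)) ^ e

theorem differentiable_psiGenFun (α t : ℝ) (q : ℕ) : Differentiable ℂ (psiGenFun α t q) := by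
  unfold psiGenFun
  fun_prop

theorem neg_one_notMem_closedBall_sub_one (hrα : r < α) :
    (-1 : ℂ) ∉ closedBall ((α : ℂ) - 1) r := by
  rw [mem_closedBall, dist_eq_norm, show (-1 : ℂ) - (α - 1) = -(α : ℂ) by ring, norm_neg,
    norm_real, Real.norm_eq_abs, not_le]
  exact hrα.trans_le (le_abs_self α)

theorem phiKernel_base_ne_zero (hr0 : 0 < r) (hrα : r < α) {v : ℂ}
    (hv : v ∈ sphere ((α : ℂ) - 1) r) : (v + 1) * (v + 1 - α) ≠ 0 := by
  refine mul_ne_zero (fun h ↦ neg_one_notMem_closedBall_sub_one hrα ?_) fun h ↦ ?_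
  · rw [← eq_neg_of_add_eq_zero_left h]
    exact sphere_subset_closedBall hv
  · rw [show v = α - 1 by linear_combination h, mem_sphere, dist_self] at hv
    exact hr0.ne hv

theorem continuousOn_phiKernel (hr0 : 0 < r) (hrα : r < α) (e : ℤ) :
    ContinuousOn (phiKernel α t e) (sphere ((α : ℂ) - 1) r) := by
  unfold phiKernel
  exact (Continuous.continuousOn (by fun_prop)).mul
    ((Continuous.continuousOn (by fun_prop)).zpow₀ e
      fun v hv ↦ .inl (phiKernel_base_ne_zero hr0 hrα hv))

theorem psiGenFun_mul_phiKernel (hr0 : 0 < r) (hrα : r < α) (e : ℤ) {v : ℂ}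
    (hv : v ∈ sphere ((α : ℂ) - 1) r) :
    psiGenFun α t q (1 + v) * ((1 + v) ^ q * phiKernel α t e v) =
      (2 * v - (α - 1) - (-1)) * ((v - (α - 1)) * (v - (-1))) ^ (e + q) := by
  have hexp : Complex.exp (t * (1 + v)) * Complex.exp (-(t * (v + 1))) = 1 := by
    rw [← Complex.exp_add, ← Complex.exp_zero]
    ring_nf
  rw [show (v - (α - 1)) * (v - -1) = (v + 1) * (v + 1 - α) by ring,
    zpow_add₀ (phiKernel_base_ne_zero hr0 hrα hv), zpow_natCast, mul_pow (v + 1), psiGenFun,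
    phiKernel]
  linear_combination
    (2 * v + 2 - α) * ((v + 1) * (v + 1 - α)) ^ e * (v + 1) ^ q * (v + 1 - α) ^ q * hexp

theorem Phi_eq_circleIntegral (x : ℤ) :
    Phi M α n j t r x = (2 * π * I)⁻¹ * ∮ v in C((α : ℂ) - 1, r),
      (1 + v) ^ (x + 2 * (n : ℤ) - 2 * (M : ℤ)) * phiKernel α t (-((n : ℤ) - j + 1)) v := by
  simp only [Phi, phiKernel]
  congr 2 with v
  ring

theorem Psi_eq_circleIntegral (hq : (n : ℤ) - k = q) (x : ℤ) :
    Psi M α n k t x = (2 * π * I)⁻¹ * ∮ w in C(0, 2),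
      w ^ ((q : ℤ) - 1 - (x + 2 * (n : ℤ) - 2 * (M : ℤ))) * psiGenFun α t q w := by
  rw [Psi]
  congr 1
  refine circleIntegral.integral_congr zero_le_two fun w hw ↦ ?_
  have hw0 : w ≠ 0 := by
    rintro rfl
    norm_num at hw
  rw [show (q : ℤ) - 1 - (x + 2 * (n : ℤ) - 2 * (M : ℤ)) =
      q + (-1 + -(x + 2 * (n : ℤ) - 2 * (M : ℤ))) by ring,
    zpow_add₀ hw0, zpow_add₀ hw0, zpow_neg_one, hq, zpow_natCast, zpow_natCast, mul_pow,
    psiGenFun]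
  ring

theorem Psi_eq_coeff (hq : (n : ℤ) - k = q) {x : ℤ} {m : ℕ}
    (hx : x + 2 * (n : ℤ) - 2 * (M : ℤ) = m + q) :
    Psi M α n k t x = (cauchyPowerSeries (psiGenFun α t q) 0 (2 : ℝ≥0)).coeff m := by
  rw [Psi_eq_circleIntegral hq, hx, show (q : ℤ) - 1 - (m + q) = -(m : ℤ) - 1 by ring]
  exact two_pi_I_inv_mul_circleIntegral_zpow_mul_eq_coeff _ _ m

theorem Psi_eq_zero (hq : (n : ℤ) - k = q) {x : ℤ} (hx : x + 2 * (n : ℤ) - 2 * (M : ℤ) < q) :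
    Psi M α n k t x = 0 := by
  obtain ⟨s, hs⟩ : ∃ s : ℕ, (q : ℤ) - 1 - (x + 2 * (n : ℤ) - 2 * (M : ℤ)) = s :=
    ⟨_, (Int.toNat_of_nonneg (by omega)).symm⟩
  rw [Psi_eq_circleIntegral hq, hs]
  simp_rw [zpow_natCast]
  rw [((differentiable_pow s).fun_mul (differentiable_psiGenFun α t q)).diffContOnCl
    |>.circleIntegral_eq_zero zero_le_two, mul_zero]

theorem summable_norm_and_hasSum_Phi_mul_Psi (hr0 : 0 < r) (hrα : r < α)
    (hq : (n : ℤ) - k = q) :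
    Summable (fun m : ℕ ↦ ‖Phi M α n j t r (m + q - 2 * n + 2 * M) *
      Psi M α n k t (m + q - 2 * n + 2 * M)‖) ∧
    HasSum (fun m : ℕ ↦ Phi M α n j t r (m + q - 2 * n + 2 * M) *
      Psi M α n k t (m + q - 2 * n + 2 * M)) (if j = k then 1 else 0) := by
  set e : ℤ := -((n : ℤ) - j + 1)
  have hterm : ∀ m : ℕ, Phi M α n j t r (m + q - 2 * n + 2 * M) *
      Psi M α n k t (m + q - 2 * n + 2 * M) = (2 * π * I)⁻¹ *
        ((∮ v in C((α : ℂ) - 1, r), (1 + v) ^ m * ((1 + v) ^ q * phiKernel α t e v)) *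
          (cauchyPowerSeries (psiGenFun α t q) 0 (2 : ℝ≥0)).coeff m) := by
    intro m
    have hy : (m + q - 2 * n + 2 * M : ℤ) + 2 * n - 2 * M = m + q := by ring
    rw [Phi_eq_circleIntegral, Psi_eq_coeff hq hy, hy, mul_assoc]
    simp_rw [← mul_assoc, ← pow_add, ← Nat.cast_add, zpow_natCast]
    rfl
  obtain ⟨hnorm, hsum⟩ := summable_norm_and_hasSum_circleIntegral_pow_mul
    (φ := fun v ↦ 1 + v) (K := fun v ↦ (1 + v) ^ q * phiKernel α t e v)
    (differentiable_psiGenFun α t q) two_pos hr0.le (by fun_prop)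
    ((Continuous.continuousOn (by fun_prop)).mul (continuousOn_phiKernel hr0 hrα e))
  have hval : (2 * π * I)⁻¹ * ∮ v in C((α : ℂ) - 1, r),
      psiGenFun α t q (1 + v) * ((1 + v) ^ q * phiKernel α t e v) = if j = k then 1 else 0 := by
    rw [circleIntegral.integral_congr hr0.le fun v ↦ psiGenFun_mul_phiKernel hr0 hrα e,
      circleIntegral_two_mul_sub_mul_zpow (mem_ball_self hr0)
        (neg_one_notMem_closedBall_sub_one hrα)]
    have he : e + q = -1 ↔ j = k := by omega
    by_cases hjk : j = k
    · rw [if_pos (he.2 hjk), if_pos hjk, inv_mul_cancel₀ two_pi_I_ne_zero]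
    · rw [if_neg (mt he.1 hjk), if_neg hjk, mul_zero]
  simp_rw [hterm]
  exact ⟨(hnorm.mul_left ‖(2 * π * I : ℂ)⁻¹‖).congr fun m ↦ (norm_mul _ _).symm,
    hval ▸ hsum.mul_left _⟩

end Orthogonality

theorem orthogonality_case_n_le_M_general
    (M : ℕ) (α : ℝ) (hα0 : 0 < α)
    (t : ℝ) (n j k : ℕ)
    (hkn : k ≤ n) :
    ∃ ε > 0, ∀ r : ℝ, 0 < r → r < ε →
      Summable (fun x : ℤ => ‖Phi M α n j t r x * Psi M α n k t x‖) ∧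
      (∑' x : ℤ, Phi M α n j t r x * Psi M α n k t x) =
        if j = k then 1 else 0 := by
  refine ⟨α, hα0, fun r hr0 hrα ↦ ?_⟩
  obtain ⟨q, hq⟩ : ∃ q : ℕ, (n : ℤ) - k = q := ⟨n - k, by omega⟩
  obtain ⟨hnorm, hsum⟩ :=
    summable_norm_and_hasSum_Phi_mul_Psi (M := M) (j := j) (t := t) hr0 hrα hq
  have hinj : Function.Injective fun m : ℕ ↦ (m + q - 2 * n + 2 * M : ℤ) :=
    fun a b h ↦ by simpa using h
  have hzero : ∀ x ∉ range fun m : ℕ ↦ (m + q - 2 * n + 2 * M : ℤ),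
      Phi M α n j t r x * Psi M α n k t x = 0 := fun x hx ↦ by
    rw [Psi_eq_zero (M := M) (x := x) hq (not_le.1 fun h ↦ hx ⟨(x + 2 * n - 2 * M - q).toNat,
      by dsimp only; omega⟩), mul_zero]
  exact ⟨(hinj.summable_iff fun x hx ↦ by rw [hzero x hx, norm_zero]).1 hnorm,
    ((hinj.hasSum_iff hzero).1 hsum).tsum_eq⟩

/-- Orthogonality `∑_{x∈ℤ} Φ^{n,t}_{n-j}(x) Ψ^{n,t}_{n-k}(x) = δ_{j,k}` for `n ≤ M`
(absolute convergence included). -/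
theorem orthogonality_case_n_le_M
    (M : ℕ) (hM : 1 ≤ M) (α : ℝ) (hα0 : 0 < α) (hα1 : α < 1)
    (t : ℝ) (ht : 0 ≤ t) (n j k : ℕ)
    (hj1 : 1 ≤ j) (hjn : j ≤ n) (hk1 : 1 ≤ k) (hkn : k ≤ n) (hnM : n ≤ M) :
    ∃ ε > 0, ∀ r : ℝ, 0 < r → r < ε →
      Summable (fun x : ℤ => ‖Phi M α n j t r x * Psi M α n k t x‖) ∧
      (∑' x : ℤ, Phi M α n j t r x * Psi M α n k t x) =
        if j = k then 1 else 0 :=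
  orthogonality_case_n_le_M_general M α hα0 t n j k hkn
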